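/- For every t ≠ 0, every Schwartz function f : ℝ^d → ℂ, and every x ∈ ℝ^d, (e^{itΔ}f)(x) = (2it)^{−d/2} e^{i|x|²/(4t)} · 𝓕( y ↦ e^{i|y|²/(4t)} f(y) )(x/(2t)), where (2it)^{−d/2} := (2|t|)^{−d/2} e^{−i·sgn(t)·dπ/4}. This is the factorization e^{itΔ} = M(t) D(t) 𝓕 M(t), where M(t) is multiplication by e^{i|x|²/(4t)} and [D(t)g](x) := (2it)^{−d/2} g(x/(2t)). -/

import Mathlib

open MeasureTheory ENNReal

noncomputable section

/-- The Fourier transform `𝓕f(ξ) = (2π)^{-d/2} ∫ e^{-ix·ξ} f(x) dx`. -/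
def fourierT {d : ℕ} (f : EuclideanSpace ℝ (Fin d) → ℂ) (ξ : EuclideanSpace ℝ (Fin d)) : ℂ :=
  (((2 * Real.pi) ^ (-(d : ℝ) / 2) : ℝ) : ℂ) *
    ∫ x : EuclideanSpace ℝ (Fin d), Complex.exp (-Complex.I * ((inner ℝ x ξ : ℝ) : ℂ)) * f x

/-- The inverse Fourier transform `𝓕⁻¹g(x) = (2π)^{-d/2} ∫ e^{ix·ξ} g(ξ) dξ`. -/
def invFourierT {d : ℕ} (g : EuclideanSpace ℝ (Fin d) → ℂ) (x : EuclideanSpace ℝ (Fin d)) : ℂ :=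
  (((2 * Real.pi) ^ (-(d : ℝ) / 2) : ℝ) : ℂ) *
    ∫ ξ : EuclideanSpace ℝ (Fin d), Complex.exp (Complex.I * ((inner ℝ x ξ : ℝ) : ℂ)) * g ξ

/-- The free Schrödinger propagator `e^{itΔ}f = 𝓕⁻¹(e^{-it|ξ|²} 𝓕f)`. -/
def schrodingerProp {d : ℕ} (t : ℝ) (f : EuclideanSpace ℝ (Fin d) → ℂ) :
    EuclideanSpace ℝ (Fin d) → ℂ :=
  invFourierT (fun ξ => Complex.exp (-Complex.I * (t : ℂ) * ((‖ξ‖ ^ 2 : ℝ) : ℂ)) * fourierT f ξ)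

/-!
Regularize the imaginary time `it` to `b` with `0 < Re b`. Then Fubini and the Gaussian Fourier
transform turn `∫ e^{-b|ξ|² + i x·ξ} 𝓕f(ξ) dξ` into
`(2π)^{-d/2} (π/b)^{d/2} ∫ e^{-|x-y|²/(4b)} f(y) dy`.
On `{Re b ≥ 0, b ≠ 0}` all these exponentials have modulus at most `1`, so by dominated convergence
both sides are continuous there and the identity persists at `b = it`. Expanding
`|x - y|² = |x|² - 2 x·y + |y|²` produces the two chirps and the Fourier transform at `x/(2t)`, and
`π/(it)` has argument `-sgn(t) π/2`, which gives the phase of `(π/(it))^{d/2}`.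
-/

open Complex
open scoped FourierTransform RealInnerProductSpace Real SchwartzMap

theorem continuousOn_integral_cexp_neg_mul_mul {α : Type*} [MeasurableSpace α] {μ : Measure α}
    {φ : α → ℝ} (hφ : AEMeasurable φ μ) (hφ_nonneg : ∀ a, 0 ≤ φ a) {g : α → ℂ}
    (hg : Integrable g μ) :
    ContinuousOn (fun c : ℂ => ∫ a, cexp (-c * φ a) * g a ∂μ) {c | 0 ≤ c.re} := by
  refine continuousOn_of_dominated (bound := fun a => ‖g a‖) (fun c _ => ?_)
    (fun c hc => .of_forall fun a => ?_) hg.norm (.of_forall fun a => ?_)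
  · have hφc : AEMeasurable (fun a => -c * φ a) μ :=
      (Complex.measurable_ofReal.comp_aemeasurable hφ).const_mul (-c)
    exact (continuous_exp.comp_aestronglyMeasurable hφc.aestronglyMeasurable).mul
      hg.aestronglyMeasurable
  · rw [norm_mul, norm_exp]
    refine mul_le_of_le_one_left (norm_nonneg _) (Real.exp_le_one_iff.2 ?_)
    simpa using mul_nonneg (Set.mem_ofPred.1 hc) (hφ_nonneg a)
  · fun_prop

theorem ofReal_mul_cpow_of_pos {r : ℝ} (hr : 0 < r) {z : ℂ} (hz : z ≠ 0) (w : ℂ) :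
    ((r : ℂ) * z) ^ w = (r : ℂ) ^ w * z ^ w := by
  rw [cpow_def_of_ne_zero (mul_ne_zero (ofReal_ne_zero.2 hr.ne') hz), log_ofReal_mul hr hz,
    cpow_def_of_ne_zero (ofReal_ne_zero.2 hr.ne'), cpow_def_of_ne_zero hz, ← exp_add,
    ofReal_log hr.le, add_mul]

theorem div_mem_slitPlane_of_re_nonneg {a : ℝ} (ha : 0 < a) {b : ℂ} (hb : 0 ≤ b.re)
    (hb0 : b ≠ 0) : (a : ℂ) / b ∈ slitPlane := by
  have hn : 0 < normSq b := normSq_pos.2 hb0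
  rcases hb.lt_or_eq with hre | hre
  · refine mem_slitPlane_iff.2 (.inl ?_)
    rw [div_re]
    simp only [ofReal_re, ofReal_im, zero_mul, zero_div, add_zero]
    positivity
  · refine mem_slitPlane_iff.2 (.inr ?_)
    have him : b.im ≠ 0 := fun h => hb0 (ext hre.symm h)
    rw [div_im]; simp [hn.ne', ha.ne', him]

theorem cpow_div_I_mul {a : ℝ} (ha : 0 < a) {t : ℝ} (ht : t ≠ 0) (w : ℝ) :
    ((a : ℂ) / (I * t)) ^ (w : ℂ) =
      (((a / |t|) ^ w : ℝ) : ℂ) * cexp (-I * (Real.sign t : ℂ) * w * π / 2) := by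
  rcases ht.lt_or_gt with ht | ht
  · have h : (a : ℂ) / (I * t) = ((a / -t : ℝ) : ℂ) * I := by
      push_cast; field_simp; rw [I_sq]; ring
    rw [h, ofReal_mul_cpow_of_pos (div_pos ha (neg_pos.2 ht)) I_ne_zero,
      ← ofReal_cpow (div_pos ha (neg_pos.2 ht)).le, cpow_def_of_ne_zero I_ne_zero, log_I,
      abs_of_neg ht, Real.sign_of_neg ht]
    push_cast; ring_nf
  · have h : (a : ℂ) / (I * t) = ((a / t : ℝ) : ℂ) * (-I) := by
      push_cast; field_simp; rw [I_sq]; ring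
    rw [h, ofReal_mul_cpow_of_pos (div_pos ha ht) (neg_ne_zero.2 I_ne_zero),
      ← ofReal_cpow (div_pos ha ht).le, cpow_def_of_ne_zero (neg_ne_zero.2 I_ne_zero), log_neg_I,
      abs_of_pos ht, Real.sign_of_pos ht]
    push_cast; ring_nf

theorem two_pi_rpow_neg_mul_pi_div_rpow {s : ℝ} (hs : 0 < s) (w : ℝ) :
    (2 * π) ^ (-w) * (π / s) ^ w = (2 * s) ^ (-w) := by
  rw [show π / s = 2 * π / (2 * s) by field_simp, Real.div_rpow (by positivity) (by positivity),
    Real.rpow_neg (by positivity), Real.rpow_neg (by positivity)]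
  field_simp

section Gaussian

variable {V : Type*} [NormedAddCommGroup V] [InnerProductSpace ℝ V] [FiniteDimensional ℝ V]
  [MeasurableSpace V] [BorelSpace V] {b : ℂ}

theorem integrable_prod_cexp_neg_mul_sq_norm_add_inner_mul (hb : 0 < b.re) {f : V → ℂ}
    (hf : Integrable f) (x : V) :
    Integrable (Function.uncurry fun ξ y : V =>
      cexp (-b * ((‖ξ‖ ^ 2 : ℝ) : ℂ) + I * ((⟪x - y, ξ⟫ : ℝ) : ℂ)) * f y) (volume.prod volume) := by
  refine ((GaussianFourier.integrable_cexp_neg_mul_sq_norm_add hb 0 (0 : V)).norm.mul_prod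
    hf.norm).mono' ?_ (.of_forall fun p => ?_)
  · exact (Continuous.aestronglyMeasurable (by fun_prop)).mul hf.aestronglyMeasurable.comp_snd
  · obtain ⟨ξ, y⟩ := p
    simp only [Function.uncurry_apply_pair, norm_mul]
    refine mul_le_mul_of_nonneg_right (le_of_eq ?_) (norm_nonneg _)
    simp [norm_exp]

theorem integral_integral_cexp_neg_mul_sq_norm_add_inner_mul (hb : 0 < b.re) {f : V → ℂ}
    (hf : Integrable f) (x : V) :
    ∫ ξ : V, ∫ y : V, cexp (-b * ((‖ξ‖ ^ 2 : ℝ) : ℂ) + I * ((⟪x - y, ξ⟫ : ℝ) : ℂ)) * f y =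
      (π / b) ^ (Module.finrank ℝ V / 2 : ℂ) *
        ∫ y : V, cexp (-(4 * b)⁻¹ * ((‖x - y‖ ^ 2 : ℝ) : ℂ)) * f y := by
  rw [integral_integral_swap (integrable_prod_cexp_neg_mul_sq_norm_add_inner_mul hb hf x),
    ← integral_const_mul]
  refine integral_congr_ae (.of_forall fun y => ?_)
  dsimp only
  rw [integral_mul_const, ← mul_assoc]
  congr 1
  push_cast
  rw [GaussianFourier.integral_cexp_neg_mul_sq_norm_add hb]
  congr 2
  rw [I_sq]
  ring

end Gaussian

section Euclidean

variable {d : ℕ}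

theorem fourierT_eq_fourier (f : EuclideanSpace ℝ (Fin d) → ℂ) (ξ : EuclideanSpace ℝ (Fin d)) :
    fourierT f ξ = (((2 * π) ^ (-(d : ℝ) / 2) : ℝ) : ℂ) * 𝓕 f ((2 * π)⁻¹ • ξ) := by
  rw [fourierT, Real.fourier_eq']
  congr 1
  refine integral_congr_ae (.of_forall fun v => ?_)
  simp only [smul_eq_mul, real_inner_smul_right]
  congr 2
  push_cast
  field_simp

theorem integrable_fourierT (f : 𝓢(EuclideanSpace ℝ (Fin d), ℂ)) : Integrable (fourierT ⇑f) := by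
  simp_rw [funext (fourierT_eq_fourier f), ← SchwartzMap.fourier_coe]
  exact ((𝓕 f).integrable.comp_smul (by positivity : (2 * π)⁻¹ ≠ 0)).const_mul _

theorem integral_cexp_neg_mul_sq_norm_mul_fourierT {f : EuclideanSpace ℝ (Fin d) → ℂ}
    (hf : Integrable f) (x : EuclideanSpace ℝ (Fin d)) {b : ℂ} (hb : 0 < b.re) :
    ∫ ξ, cexp (-b * ((‖ξ‖ ^ 2 : ℝ) : ℂ)) * (cexp (I * ((⟪x, ξ⟫ : ℝ) : ℂ)) * fourierT f ξ) =
      (((2 * π) ^ (-(d : ℝ) / 2) : ℝ) : ℂ) * ((π / b) ^ ((d : ℂ) / 2) *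
        ∫ y, cexp (-(4 * b)⁻¹ * ((‖x - y‖ ^ 2 : ℝ) : ℂ)) * f y) := by
  have h := integral_integral_cexp_neg_mul_sq_norm_add_inner_mul hb hf x
  rw [finrank_euclideanSpace_fin] at h
  rw [← h, ← integral_const_mul]
  refine integral_congr_ae (.of_forall fun ξ => ?_)
  simp only [fourierT, ← integral_const_mul]
  refine integral_congr_ae (.of_forall fun y => ?_)
  dsimp only
  rw [inner_sub_left (𝕜 := ℝ), Complex.ofReal_sub, mul_sub, sub_eq_add_neg, ← add_assoc,
    exp_add, exp_add, ← neg_mul]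
  ring

theorem integral_cexp_neg_mul_sq_norm_mul_fourierT_of_re_nonneg
    {f : EuclideanSpace ℝ (Fin d) → ℂ} (hf : Integrable f) (hFf : Integrable (fourierT f))
    (x : EuclideanSpace ℝ (Fin d)) {b : ℂ} (hb : 0 ≤ b.re) (hb0 : b ≠ 0) :
    ∫ ξ, cexp (-b * ((‖ξ‖ ^ 2 : ℝ) : ℂ)) * (cexp (I * ((⟪x, ξ⟫ : ℝ) : ℂ)) * fourierT f ξ) =
      (((2 * π) ^ (-(d : ℝ) / 2) : ℝ) : ℂ) * ((π / b) ^ ((d : ℂ) / 2) *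
        ∫ y, cexp (-(4 * b)⁻¹ * ((‖x - y‖ ^ 2 : ℝ) : ℂ)) * f y) := by
  have hphase : Integrable fun ξ => cexp (I * ((⟪x, ξ⟫ : ℝ) : ℂ)) * fourierT f ξ :=
    hFf.bdd_mul (c := 1) (Continuous.aestronglyMeasurable (by fun_prop))
      (.of_forall fun ξ => by rw [mul_comm, norm_exp_ofReal_mul_I])
  have hlhs : ContinuousOn (fun b : ℂ => ∫ ξ, cexp (-b * ((‖ξ‖ ^ 2 : ℝ) : ℂ)) *
      (cexp (I * ((⟪x, ξ⟫ : ℝ) : ℂ)) * fourierT f ξ)) {b | 0 ≤ b.re ∧ b ≠ 0} :=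
    (continuousOn_integral_cexp_neg_mul_mul (by fun_prop) (fun ξ => by positivity) hphase).mono
      fun b hb => hb.1
  have hkernel : ContinuousOn (fun b : ℂ => ∫ y, cexp (-(4 * b)⁻¹ * ((‖x - y‖ ^ 2 : ℝ) : ℂ)) * f y)
      {b | 0 ≤ b.re ∧ b ≠ 0} := by
    refine (continuousOn_integral_cexp_neg_mul_mul (φ := fun y => ‖x - y‖ ^ 2) (by fun_prop)
      (fun y => by positivity) hf).comp
      ((continuousOn_const.mul continuousOn_id).inv₀ fun b hb => mul_ne_zero (by norm_num) hb.2)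
      fun b hb => ?_
    rw [Set.mem_ofPred, inv_re]
    exact div_nonneg (by simpa using hb.1) (normSq_nonneg _)
  have hrhs : ContinuousOn (fun b : ℂ => (((2 * π) ^ (-(d : ℝ) / 2) : ℝ) : ℂ) *
      ((π / b) ^ ((d : ℂ) / 2) * ∫ y, cexp (-(4 * b)⁻¹ * ((‖x - y‖ ^ 2 : ℝ) : ℂ)) * f y))
      {b | 0 ≤ b.re ∧ b ≠ 0} :=
    continuousOn_const.mul (((continuousOn_const.div continuousOn_id fun b hb => hb.2).cpow_const
      fun b hb => div_mem_slitPlane_of_re_nonneg Real.pi_pos hb.1 hb.2).mul hkernel)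
  refine Set.EqOn.of_subset_closure (s := {b : ℂ | 0 < b.re})
    (fun b hb => integral_cexp_neg_mul_sq_norm_mul_fourierT hf x hb) hlhs hrhs
    (fun b hb => ⟨le_of_lt hb, fun h => by simp [h] at hb⟩) ?_ ⟨hb, hb0⟩
  rw [closure_setOfPred_lt_re]
  exact fun b hb => hb.1

theorem two_pi_rpow_mul_cpow_pi_div_I_mul (d : ℕ) {t : ℝ} (ht : t ≠ 0) :
    (((2 * π) ^ (-(d : ℝ) / 2) : ℝ) : ℂ) * (π / (I * t)) ^ ((d : ℂ) / 2) =
      (((2 * |t|) ^ (-(d : ℝ) / 2) : ℝ) : ℂ) * cexp (-I * (Real.sign t : ℂ) * d * π / 4) := by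
  have h := cpow_div_I_mul Real.pi_pos ht (d / 2)
  push_cast at h
  rw [h, ← mul_assoc, ← Complex.ofReal_mul, neg_div,
    two_pi_rpow_neg_mul_pi_div_rpow (abs_pos.2 ht)]
  ring_nf

theorem schrodingerProp_eq_integral (t : ℝ) (f : EuclideanSpace ℝ (Fin d) → ℂ)
    (x : EuclideanSpace ℝ (Fin d)) :
    schrodingerProp t f x = (((2 * π) ^ (-(d : ℝ) / 2) : ℝ) : ℂ) *
      ∫ ξ, cexp (-(I * t) * ((‖ξ‖ ^ 2 : ℝ) : ℂ)) *
        (cexp (I * ((⟪x, ξ⟫ : ℝ) : ℂ)) * fourierT f ξ) := by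
  rw [schrodingerProp, invFourierT]
  congr 1
  refine integral_congr_ae (.of_forall fun ξ => ?_)
  dsimp only
  rw [mul_left_comm, neg_mul I]

theorem fourierT_chirp_eq_integral (f : EuclideanSpace ℝ (Fin d) → ℂ) (t : ℝ)
    (x : EuclideanSpace ℝ (Fin d)) :
    cexp (I * ((‖x‖ ^ 2 : ℝ) : ℂ) / (4 * t)) *
        fourierT (fun y => cexp (I * ((‖y‖ ^ 2 : ℝ) : ℂ) / (4 * t)) * f y) ((2 * t)⁻¹ • x) =
      (((2 * π) ^ (-(d : ℝ) / 2) : ℝ) : ℂ) *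
        ∫ y, cexp (-(4 * (I * t))⁻¹ * ((‖x - y‖ ^ 2 : ℝ) : ℂ)) * f y := by
  rw [fourierT, mul_left_comm, ← integral_const_mul]
  congr 1
  refine integral_congr_ae (.of_forall fun y => ?_)
  dsimp only
  rw [← mul_assoc, ← mul_assoc, ← exp_add, ← exp_add, norm_sub_sq_real, real_inner_smul_right,
    real_inner_comm]
  congr 2
  push_cast
  simp only [mul_inv, inv_I]
  ring

end Euclidean

/-- The factorization `e^{itΔ} = M(t) D(t) 𝓕 M(t)`:
`(e^{itΔ}f)(x) = (2it)^{-d/2} e^{i|x|²/(4t)} 𝓕(e^{i|·|²/(4t)} f)(x/(2t))`, with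
`(2it)^{-d/2} = (2|t|)^{-d/2} e^{-i·sgn(t)·dπ/4}`. -/
theorem schrodingerProp_factorization
    (d : ℕ) (t : ℝ) (ht : t ≠ 0) (f : SchwartzMap (EuclideanSpace ℝ (Fin d)) ℂ)
    (x : EuclideanSpace ℝ (Fin d)) :
    schrodingerProp t (⇑f) x
      = (((2 * |t|) ^ (-(d : ℝ) / 2) : ℝ) : ℂ) *
          Complex.exp (-Complex.I * (Real.sign t : ℂ) * (d : ℂ) * (Real.pi : ℂ) / 4) *
          (Complex.exp (Complex.I * ((‖x‖ ^ 2 : ℝ) : ℂ) / (4 * (t : ℂ))) *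
            fourierT (fun y => Complex.exp (Complex.I * ((‖y‖ ^ 2 : ℝ) : ℂ) / (4 * (t : ℂ))) * f y)
              ((2 * t)⁻¹ • x)) := by
  have hIt : 0 ≤ (I * t).re := by simp
  have hIt0 : I * t ≠ 0 := mul_ne_zero I_ne_zero (ofReal_ne_zero.2 ht)
  rw [schrodingerProp_eq_integral, integral_cexp_neg_mul_sq_norm_mul_fourierT_of_re_nonneg
    f.integrable (integrable_fourierT f) x hIt hIt0, fourierT_chirp_eq_integral,
    ← two_pi_rpow_mul_cpow_pi_div_I_mul d ht]
  ring

end
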